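/- arXiv:2212.07392 — 2 statements merged into one kernel-verified Lean document; each statement's English description precedes it below -/
import Mathlib

section
/- Verification of the exact two-soliton solution: the function u(x,t) = [8e^{4it}(9e^{-4x}+16e^{4x}) − 32e^{16it}(4e^{-2x}+9e^{2x})] / [−128cos(12t) + 4e^{-6x} + 16e^{6x} + 81e^{-2x} + 64e^{2x}] solves the focusing cubic nonlinear Schrödinger equation i∂ₜu = −∂ₓₓu − 2|u|²u on ℝ × ℝ, and the denominator is strictly positive for all (x,t) ∈ ℝ². -/
/-- Denominator of the exact two-soliton solution. -/
noncomputable def solDenom (x t : ℝ) : ℝ :=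
  -128 * Real.cos (12 * t) + 4 * Real.exp (-6 * x) + 16 * Real.exp (6 * x)
    + 81 * Real.exp (-2 * x) + 64 * Real.exp (2 * x)

/-- Numerator of the exact two-soliton solution. -/
noncomputable def solNum (x t : ℝ) : ℂ :=
  8 * Complex.exp (4 * Complex.I * (t : ℂ))
      * ((9 * Real.exp (-4 * x) + 16 * Real.exp (4 * x) : ℝ) : ℂ)
    - 32 * Complex.exp (16 * Complex.I * (t : ℂ))
      * ((4 * Real.exp (-2 * x) + 9 * Real.exp (2 * x) : ℝ) : ℂ)

/-- The exact two-soliton solution. -/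
noncomputable def twoSoliton (x t : ℝ) : ℂ := solNum x t / ((solDenom x t : ℝ) : ℂ)

/-! Write `u = G / F` with `F` real and nonvanishing. In Hirota's bilinear notation,
`F³ (i uₜ + uₓₓ + 2|u|²u) = F (i Dₜ + Dₓ²)(G·F) - G (Dₓ²(F·F) - 2|G|²)`, so `u` solves the
equation as soon as `i (Gₜ F - G Fₜ) + Gₓₓ F - 2 Gₓ Fₓ + G Fₓₓ = 0` and `F Fₓₓ - Fₓ² = |G|²`.

Here `G = 8 e^{4it} p - 32 e^{16it} q` and `F = r - 128 cos 12t`, where `p'' = 16 p`, `q'' = 4 q`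
and `r'' = 4 p q`. Since `e^{16it} = e^{4it} e^{12it}`, the first bilinear equation splits along
the phases `e^{4it}` and `e^{16it}` into two exponential-polynomial identities in `x`; the second
reduces to `r r'' - r'² = 64 p² + 1024 q²`. Positivity of `F` comes from AM-GM,
`81 e^{-2x} + 64 e^{2x} ≥ 144 > 128`. -/

open Complex in
theorem nls_of_hirota {G Gt Gx Gxx : ℂ} {F Ft Fx Fxx : ℝ} (hF : F ≠ 0)
    (hG : I * (Gt * F - G * Ft) + (Gxx * F - 2 * Gx * Fx + G * Fxx) = 0)
    (hFF : F * Fxx - Fx ^ 2 = ‖G‖ ^ 2) :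
    I * ((Gt * F - G * Ft) / (F : ℂ) ^ 2)
      = -((Gxx * F ^ 2 - 2 * Gx * Fx * F - G * Fxx * F + 2 * G * Fx ^ 2) / (F : ℂ) ^ 3)
        - 2 * (‖G / F‖ : ℂ) ^ 2 * (G / F) := by
  have hnorm : (‖G / F‖ : ℂ) ^ 2 = ((F * Fxx - Fx ^ 2) / F ^ 2 : ℝ) := by
    rw [← ofReal_pow, norm_div, norm_real, Real.norm_eq_abs, div_pow, sq_abs, hFF]
  have hF' : (F : ℂ) ≠ 0 := ofReal_ne_zero.2 hF
  rw [hnorm]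
  push_cast
  field_simp
  linear_combination (F : ℂ) * hG

section QuotientRule

variable {𝕜 𝕜' : Type*} [NontriviallyNormedField 𝕜] [NontriviallyNormedField 𝕜']
  [NormedAlgebra 𝕜 𝕜'] {g g' f f' : 𝕜 → 𝕜'} {g'' f'' : 𝕜'} {x : 𝕜}

theorem deriv_deriv_div (hg : ∀ y, HasDerivAt g (g' y) y) (hf : ∀ y, HasDerivAt f (f' y) y)
    (hg' : HasDerivAt g' g'' x) (hf' : HasDerivAt f' f'' x) (hf0 : ∀ y, f y ≠ 0) :
    deriv (deriv fun y => g y / f y) x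
      = (g'' * f x ^ 2 - 2 * g' x * f' x * f x - g x * f'' * f x + 2 * g x * f' x ^ 2)
        / f x ^ 3 := by
  have hfirst : deriv (fun y => g y / f y) = fun y => (g' y * f y - g y * f' y) / f y ^ 2 :=
    funext fun y => ((hg y).div (hf y) (hf0 y)).deriv
  have hsecond : HasDerivAt (fun y => (g' y * f y - g y * f' y) / f y ^ 2) _ x :=
    ((hg'.mul (hf x)).sub ((hg x).mul hf')).div ((hf x).pow 2) (pow_ne_zero 2 (hf0 x))
  rw [hfirst, hsecond.deriv]
  have := hf0 x
  simp only [Pi.sub_apply, Pi.mul_apply]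
  field_simp
  ring

end QuotientRule

noncomputable def expPair (a b : ℝ) (k : ℕ) (x : ℝ) : ℝ :=
  a * Real.exp (-k * x) + b * Real.exp (k * x)

theorem expPair_eq (a b : ℝ) (k : ℕ) (x : ℝ) :
    expPair a b k x = a * (Real.exp x ^ k)⁻¹ + b * Real.exp x ^ k := by
  rw [expPair, neg_mul, Real.exp_neg, Real.exp_nat_mul]

theorem hasDerivAt_expPair {a b a' b' : ℝ} {k : ℕ} (ha : a' = -(k * a)) (hb : b' = k * b)
    (x : ℝ) : HasDerivAt (expPair a b k) (expPair a' b' k x) x := by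
  have hexp (c : ℝ) : HasDerivAt (fun y => Real.exp (c * y)) (Real.exp (c * x) * c) x := by
    simpa using ((hasDerivAt_id x).const_mul c).exp
  refine (((hexp (-k)).const_mul a).add ((hexp k).const_mul b)).congr_deriv ?_
  rw [expPair, ha, hb]
  ring

theorem two_mul_sqrt_mul_le_expPair {a b : ℝ} (ha : 0 ≤ a) (hb : 0 ≤ b) (k : ℕ) (x : ℝ) :
    2 * √(a * b) ≤ expPair a b k x := by
  set A := a * Real.exp (-k * x)
  set B := b * Real.exp (k * x)
  have hAB : A * B = a * b := by
    rw [show A * B = a * b * (Real.exp (-k * x) * Real.exp (k * x)) by ring, ← Real.exp_add]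
    simp
  have hA : 0 ≤ A := by positivity
  have hB : 0 ≤ B := by positivity
  calc 2 * √(a * b) = 2 * √A * √B := by rw [← hAB, Real.sqrt_mul hA]; ring
    _ ≤ √A ^ 2 + √B ^ 2 := two_mul_le_add_sq _ _
    _ = expPair a b k x := by rw [Real.sq_sqrt hA, Real.sq_sqrt hB]; rfl

namespace TwoSoliton

noncomputable def p (x : ℝ) : ℝ := expPair 9 16 4 x
noncomputable def p' (x : ℝ) : ℝ := expPair (-36) 64 4 x
noncomputable def q (x : ℝ) : ℝ := expPair 4 9 2 x
noncomputable def q' (x : ℝ) : ℝ := expPair (-8) 18 2 x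
noncomputable def r (x : ℝ) : ℝ := expPair 4 16 6 x + expPair 81 64 2 x
noncomputable def r' (x : ℝ) : ℝ := expPair (-24) 96 6 x + expPair (-162) 128 2 x

theorem hasDerivAt_p (x : ℝ) : HasDerivAt p (p' x) x :=
  hasDerivAt_expPair (by norm_num) (by norm_num) x

theorem hasDerivAt_p' (x : ℝ) : HasDerivAt p' (16 * p x) x :=
  (hasDerivAt_expPair (a' := 144) (b' := 256) (by norm_num) (by norm_num) x).congr_deriv
    (by simp only [p, expPair]; ring)

theorem hasDerivAt_q (x : ℝ) : HasDerivAt q (q' x) x :=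
  hasDerivAt_expPair (by norm_num) (by norm_num) x

theorem hasDerivAt_q' (x : ℝ) : HasDerivAt q' (4 * q x) x :=
  (hasDerivAt_expPair (a' := 16) (b' := 36) (by norm_num) (by norm_num) x).congr_deriv
    (by simp only [q, expPair]; ring)

theorem hasDerivAt_r (x : ℝ) : HasDerivAt r (r' x) x :=
  (hasDerivAt_expPair (by norm_num) (by norm_num) x).add
    (hasDerivAt_expPair (by norm_num) (by norm_num) x)

theorem hasDerivAt_r' (x : ℝ) : HasDerivAt r' (4 * p x * q x) x := by
  refine ((hasDerivAt_expPair (a' := 144) (b' := 576) (by norm_num) (by norm_num) x).add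
    (hasDerivAt_expPair (a' := 324) (b' := 256) (by norm_num) (by norm_num) x)).congr_deriv ?_
  have := Real.exp_pos x
  simp only [p, q, expPair_eq]
  field_simp
  ring

theorem r_wronskian (x : ℝ) :
    4 * r x * p x * q x - r' x ^ 2 = 64 * p x ^ 2 + 1024 * q x ^ 2 := by
  have := Real.exp_pos x
  simp only [p, q, r, r', expPair_eq]
  field_simp
  ring

theorem coeff_exp_four_eq_zero (x : ℝ) :
    6 * r x * p x - 3072 * q x - r' x * p' x + 2 * p x ^ 2 * q x = 0 := by
  have := Real.exp_pos x
  simp only [p, p', q, r, r', expPair_eq]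
  field_simp
  ring

theorem coeff_exp_sixteen_eq_zero (x : ℝ) :
    6 * r x * q x - 192 * p x + r' x * q' x - 2 * p x * q x ^ 2 = 0 := by
  have := Real.exp_pos x
  simp only [p, q, q', r, r', expPair_eq]
  field_simp
  ring

open Complex

theorem solDenom_eq (x t : ℝ) : solDenom x t = r x - 128 * Real.cos (12 * t) := by
  simp only [solDenom, r, expPair, Nat.cast_ofNat]
  ring

theorem solDenom_pos (x t : ℝ) : 0 < solDenom x t := by
  have hamgm := two_mul_sqrt_mul_le_expPair (a := 81) (b := 64) (by norm_num) (by norm_num) 2 x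
  rw [show (81 : ℝ) * 64 = 72 ^ 2 by norm_num, Real.sqrt_sq (by norm_num)] at hamgm
  have : 0 < expPair 4 16 6 x := by unfold expPair; positivity
  rw [solDenom_eq, r]
  linarith [Real.cos_le_one (12 * t)]

theorem hasDerivAt_solDenom_x (t x : ℝ) : HasDerivAt (solDenom · t) (r' x) x := by
  simp only [solDenom_eq]
  exact (hasDerivAt_r x).sub_const _

theorem hasDerivAt_solDenom_t (x t : ℝ) :
    HasDerivAt (solDenom x ·) (1536 * Real.sin (12 * t)) t := by
  simp only [solDenom_eq]
  refine ((((hasDerivAt_id t).const_mul 12).cos.const_mul 128).const_sub _).congr_deriv ?_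
  simp only [id]
  ring

theorem solNum_eq (x t : ℝ) :
    solNum x t = 8 * exp (4 * I * t) * p x - 32 * exp (16 * I * t) * q x := by
  simp only [solNum, p, q, expPair, Nat.cast_ofNat]

theorem exp_sixteen_mul_I (t : ℝ) :
    exp (16 * I * t) = exp (4 * I * t) * (Real.cos (12 * t) + Real.sin (12 * t) * I) := by
  rw [show 16 * I * t = 4 * I * t + ((12 * t : ℝ) : ℂ) * I by push_cast; ring, exp_add, exp_mul_I]
  push_cast
  rfl

noncomputable def solNumDx (x t : ℝ) : ℂ :=
  8 * exp (4 * I * t) * p' x - 32 * exp (16 * I * t) * q' x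

theorem hasDerivAt_solNum_x (t x : ℝ) : HasDerivAt (solNum · t) (solNumDx x t) x := by
  simp only [solNum_eq]
  exact ((hasDerivAt_p x).ofReal_comp.const_mul _).sub ((hasDerivAt_q x).ofReal_comp.const_mul _)

theorem hasDerivAt_solNumDx (t x : ℝ) :
    HasDerivAt (solNumDx · t) (128 * exp (4 * I * t) * p x - 128 * exp (16 * I * t) * q x) x := by
  refine (((hasDerivAt_p' x).ofReal_comp.const_mul _).sub
    ((hasDerivAt_q' x).ofReal_comp.const_mul _)).congr_deriv ?_
  push_cast
  ring

theorem hasDerivAt_solNum_t (x t : ℝ) :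
    HasDerivAt (solNum x ·)
      (32 * I * exp (4 * I * t) * p x - 512 * I * exp (16 * I * t) * q x) t := by
  have hexp (c : ℂ) : HasDerivAt (fun s : ℝ => exp (c * s)) (exp (c * t) * c) t := by
    simpa using ((hasDerivAt_id t).ofReal_comp.const_mul c).cexp
  simp only [solNum_eq]
  refine ((((hexp _).const_mul 8).mul_const _).sub
    (((hexp _).const_mul 32).mul_const _)).congr_deriv ?_
  ring

theorem norm_solNum_sq (x t : ℝ) :
    ‖solNum x t‖ ^ 2 = 64 * (p x ^ 2 - 8 * Real.cos (12 * t) * p x * q x + 16 * q x ^ 2) := by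
  have hphase : ‖exp (4 * I * t)‖ = 1 := by
    rw [show 4 * I * t = ((4 * t : ℝ) : ℂ) * I by push_cast; ring, norm_exp_ofReal_mul_I]
  have hfactor : solNum x t = 8 * exp (4 * I * t)
      * ((p x - 4 * Real.cos (12 * t) * q x : ℝ) + (-4 * Real.sin (12 * t) * q x : ℝ) * I) := by
    rw [solNum_eq, exp_sixteen_mul_I]
    push_cast
    ring
  rw [hfactor, norm_mul, norm_mul, hphase, norm_ofNat, mul_one, mul_pow, Complex.sq_norm,
    normSq_add_mul_I]
  linear_combination (1024 * q x ^ 2) * Real.cos_sq_add_sin_sq (12 * t)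

theorem bilinear_modulus (x t : ℝ) :
    solDenom x t * (4 * p x * q x) - r' x ^ 2 = ‖solNum x t‖ ^ 2 := by
  rw [norm_solNum_sq, solDenom_eq]
  linear_combination r_wronskian x

theorem bilinear_schrodinger (x t : ℝ) :
    I * ((32 * I * exp (4 * I * t) * p x - 512 * I * exp (16 * I * t) * q x) * solDenom x t
        - solNum x t * (1536 * Real.sin (12 * t) : ℝ))
      + ((128 * exp (4 * I * t) * p x - 128 * exp (16 * I * t) * q x) * solDenom x t
        - 2 * solNumDx x t * r' x + solNum x t * (4 * p x * q x : ℝ)) = 0 := by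
  have hp : (_ : ℂ) = _ := congrArg ofReal (coeff_exp_four_eq_zero x)
  have hq : (_ : ℂ) = _ := congrArg ofReal (coeff_exp_sixteen_eq_zero x)
  have hcs : (_ : ℂ) = _ := congrArg ofReal (Real.cos_sq_add_sin_sq (12 * t))
  rw [solNumDx, solNum_eq, solDenom_eq, exp_sixteen_mul_I]
  push_cast at hp hq hcs ⊢
  linear_combination (norm := ring_nf) (16 * exp (4 * I * t)) * hp
    + (64 * exp (4 * I * t) * (cos (12 * t) + sin (12 * t) * I)) * hq
    - 49152 * q x * exp (4 * I * t) * hcs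
  simp only [I_sq, I_pow_three]
  ring

end TwoSoliton

open TwoSoliton

/-- Verification of the exact two-soliton solution: the denominator is strictly positive on
all of `ℝ²`, and the function solves the focusing cubic nonlinear Schrödinger equation
`i ∂ₜ u = − ∂ₓₓ u − 2|u|² u` on `ℝ × ℝ`. -/
theorem twoSoliton_solves_NLS :
    (∀ x t : ℝ, 0 < solDenom x t) ∧
      (∀ x t : ℝ,
        Complex.I * deriv (fun s => twoSoliton x s) t
          = - deriv (fun y => deriv (fun z => twoSoliton z t) y) x
            - 2 * (‖twoSoliton x t‖ : ℂ) ^ 2 * twoSoliton x t) := by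
  refine ⟨solDenom_pos, fun x t => ?_⟩
  have hF (y : ℝ) : ((solDenom y t : ℝ) : ℂ) ≠ 0 :=
    Complex.ofReal_ne_zero.2 (solDenom_pos y t).ne'
  unfold twoSoliton
  have hdt : HasDerivAt (fun s => solNum x s / (solDenom x s : ℂ)) _ t :=
    (hasDerivAt_solNum_t x t).div (hasDerivAt_solDenom_t x t).ofReal_comp (hF x)
  rw [hdt.deriv, deriv_deriv_div (hasDerivAt_solNum_x t)
    (fun y => (hasDerivAt_solDenom_x t y).ofReal_comp) (hasDerivAt_solNumDx t x)
    (hasDerivAt_r' x).ofReal_comp hF]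
  exact nls_of_hirota (solDenom_pos x t).ne' (bilinear_schrodinger x t) (bilinear_modulus x t)
end

section
/- One-dimensional canonical LOD functions are piecewise cubic: on D=(0,1) with a_c(u,v)=∫₀¹ u'v' dx, if v_LOD ∈ V_LOD (the a_c-orthogonal complement of W = ker(L²-projection onto the P1 finite element space V_H on a partition of (0,1))), then v_LOD = Δ⁻¹v_H for some v_H ∈ V_H (where Δ⁻¹ denotes the solution operator a_c(Δ⁻¹f, w) = (f,w) for all w ∈ H¹₀), and consequently v_LOD is a piecewise polynomial of degree at most 3 on the partition. -/
/-!
Test functions of the detail space `W` are exactly `w = ∫₀^· ψ` with `ψ` orthogonal in `L²(0, 1)`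
to the constants and to the primitives of `V_H` (integrate `(p, w)` by parts). Together these
span a finite-dimensional space `S`, and `a_c(v, W) = 0` says that `v'` annihilates every
continuous `ψ ⊥ S`; by finite-dimensional duality `v' ∈ S` on `[0, 1]`, i.e.
`v' = c - ∫₀^y v_H` for some `v_H ∈ V_H`, which is the weak form of `-v'' = v_H`. On each cell
`v_H` is affine, so integrating twice makes `v` cubic there.
-/

open MeasureTheory Set Polynomial

theorem Polynomial.exists_derivative_eq {K : Type*} [Field K] [CharZero K] (q : K[X]) :
    ∃ Q : K[X], derivative Q = q ∧ Q.natDegree ≤ q.natDegree + 1 := by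
  refine ⟨∑ i ∈ Finset.range (q.natDegree + 1), monomial (i + 1) (q.coeff i / (i + 1)), ?_, ?_⟩
  · conv_rhs => rw [q.as_sum_range]
    simp only [map_sum, derivative_monomial_succ]
    refine Finset.sum_congr rfl fun i _ => ?_
    rw [div_mul_cancel₀ _ (Nat.cast_add_one_ne_zero i)]
  · refine natDegree_sum_le_of_forall_le _ _ fun i hi => (natDegree_monomial_le _).trans ?_
    have := Finset.mem_range.1 hi
    omega

theorem exists_polynomial_eqOn_of_hasDerivAt_eval {f : ℝ → ℝ} {q : ℝ[X]} {n : ℕ} {s e : ℝ}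
    (hq : q.natDegree ≤ n) (hf : ∀ y ∈ Icc s e, HasDerivAt f (q.eval y) y) :
    ∃ p : ℝ[X], p.natDegree ≤ n + 1 ∧ EqOn f (fun y => p.eval y) (Icc s e) := by
  obtain ⟨Q, hQ, hQdeg⟩ := q.exists_derivative_eq
  have hconst := constant_of_has_deriv_right_zero (f := f - fun y => Q.eval y)
    (fun y hy => ((hf y hy).continuousAt.sub (Q.continuous.continuousAt)).continuousWithinAt)
    fun y hy => by
      simpa [hQ] using ((hf y (Ico_subset_Icc_self hy)).sub (Q.hasDerivAt y)).hasDerivWithinAt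
  refine ⟨Q + C (f s - Q.eval s), by rw [natDegree_add_C]; omega, fun y hy => ?_⟩
  have := hconst y hy
  simp only [Pi.sub_apply] at this
  simp only [eval_add, eval_C]
  linarith

theorem eqOn_zero_of_integral_mul_self_eq_zero {f : ℝ → ℝ} {a b : ℝ} (hab : a < b)
    (hf : ContinuousOn f (Icc a b)) (h : ∫ y in a..b, f y * f y = 0) : EqOn f 0 (Icc a b) := by
  intro y hy
  by_contra hne
  have := intervalIntegral.integral_lt_integral_of_continuousOn_of_le_of_exists_lt hab
    continuousOn_const (hf.mul hf) (fun x _ => mul_self_nonneg (f x))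
    ⟨y, hy, mul_self_pos.2 hne⟩
  simp [h] at this

theorem integral_mul_eq_neg_integral_primitive_mul {p w w' : ℝ → ℝ} {a b : ℝ}
    (hp : Continuous p) (hw : ∀ y, HasDerivAt w (w' y) y) (hw' : IntervalIntegrable w' volume a b)
    (ha : w a = 0) (hb : w b = 0) :
    ∫ y in a..b, p y * w y = -∫ y in a..b, (∫ t in a..y, p t) * w' y := by
  have := intervalIntegral.integral_mul_deriv_eq_deriv_mul
    (fun y _ => (hp.integral_hasStrictDerivAt a y).hasDerivAt) (fun y _ => hw y)
    (hp.intervalIntegrable a b) hw'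
  rw [this, ha, hb]
  ring

noncomputable def intervalPairing (a b : ℝ) : C(ℝ, ℝ) →ₗ[ℝ] C(ℝ, ℝ) →ₗ[ℝ] ℝ :=
  LinearMap.mk₂ ℝ (fun f g => ∫ y in a..b, f y * g y)
    (fun f₁ f₂ g => by
      simp only [ContinuousMap.add_apply, add_mul]
      exact intervalIntegral.integral_add ((f₁.2.mul g.2).intervalIntegrable a b)
        ((f₂.2.mul g.2).intervalIntegrable a b))
    (fun c f g => by simp [mul_assoc, intervalIntegral.integral_const_mul])
    (fun f g₁ g₂ => by
      simp only [ContinuousMap.add_apply, mul_add]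
      exact intervalIntegral.integral_add ((f.2.mul g₁.2).intervalIntegrable a b)
        ((f.2.mul g₂.2).intervalIntegrable a b))
    (fun c f g => by simp [mul_left_comm _ c, intervalIntegral.integral_const_mul])

theorem exists_eqOn_sum_of_forall_integral_mul_eq_zero {ι : Type*} [Fintype ι] {a b : ℝ}
    (hab : a < b) {g : ℝ → ℝ} {u : ι → ℝ → ℝ} (hg : Continuous g) (hu : ∀ i, Continuous (u i))
    (h : ∀ ψ : ℝ → ℝ, Continuous ψ → (∀ i, ∫ y in a..b, u i y * ψ y = 0) →
      ∫ y in a..b, g y * ψ y = 0) :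
    ∃ c : ι → ℝ, EqOn g (fun y => ∑ i, c i * u i y) (Icc a b) := by
  let B := intervalPairing a b
  let U : ι → C(ℝ, ℝ) := fun i => ⟨u i, hu i⟩
  let G : C(ℝ, ℝ) := ⟨g, hg⟩
  have hker : ⨅ i, LinearMap.ker (B (U i)) ≤ LinearMap.ker (B G) := fun ψ hψ => by
    simp only [Submodule.mem_iInf, LinearMap.mem_ker] at hψ
    exact h ψ ψ.continuous hψ
  obtain ⟨c, hc⟩ := (Submodule.mem_span_range_iff_exists_fun ℝ).1 (mem_span_of_iInf_ker_le_ker hker)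
  -- the residual `G - ∑ c i • U i` is orthogonal to itself
  let R := G - ∑ i, c i • U i
  have hR : B R = 0 := by simp only [R, map_sub, map_sum, map_smul, hc, sub_self]
  refine ⟨c, fun y hy => sub_eq_zero.1 ?_⟩
  simpa [R, U, G] using eqOn_zero_of_integral_mul_self_eq_zero hab R.continuous.continuousOn
    (LinearMap.congr_fun hR R) hy

theorem integral_sum_smul_apply {ι : Type*} (s : Finset ι) (d : ι → ℝ) {φ : ι → ℝ → ℝ}
    (hφ : ∀ k, Continuous (φ k)) (a b : ℝ) :
    ∫ t in a..b, (∑ k ∈ s, d k • φ k) t = ∑ k ∈ s, d k * ∫ t in a..b, φ k t := by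
  simp only [Finset.sum_apply, Pi.smul_apply, smul_eq_mul]
  rw [intervalIntegral.integral_finsetSum fun k _ =>
    ((hφ k).intervalIntegrable a b).const_mul (d k)]
  simp only [intervalIntegral.integral_const_mul]

theorem integral_primitive_mul_eq_zero_of_eqOn_sum {ι : Type*} [Fintype ι] {φ : ι → ℝ → ℝ}
    (hφ : ∀ k, Continuous (φ k)) {p ψ : ℝ → ℝ} {d : ι → ℝ} {a b : ℝ} (hab : a ≤ b)
    (hp : EqOn p (∑ k, d k • φ k) (Icc a b)) (hψ : Continuous ψ)
    (hψφ : ∀ k, ∫ y in a..b, (∫ t in a..y, φ k t) * ψ y = 0) :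
    ∫ y in a..b, (∫ t in a..y, p t) * ψ y = 0 := by
  have hprim : ∀ y ∈ uIcc a b, ∫ t in a..y, p t = ∑ k, d k * ∫ t in a..y, φ k t := by
    intro y hy
    rw [uIcc_of_le hab] at hy
    rw [← integral_sum_smul_apply _ _ hφ]
    refine intervalIntegral.integral_congr fun t ht => hp ?_
    rw [uIcc_of_le hy.1] at ht
    exact ⟨ht.1, ht.2.trans hy.2⟩
  have hint : ∀ k, IntervalIntegrable (fun y => (∫ t in a..y, φ k t) * ψ y) volume a b :=
    fun k => ((intervalIntegral.continuous_primitive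
      (fun _ _ => (hφ k).intervalIntegrable _ _) a).mul hψ).intervalIntegrable a b
  rw [intervalIntegral.integral_congr fun y hy => congrArg (· * ψ y) (hprim y hy)]
  simp only [Finset.sum_mul, mul_assoc]
  rw [intervalIntegral.integral_finsetSum fun k _ => (hint k).const_mul (d k)]
  simp only [intervalIntegral.integral_const_mul, hψφ, mul_zero, Finset.sum_const_zero]

theorem integral_deriv_mul_eq_zero_of_orthogonal {S : Set (ℝ → ℝ)} (hS : ∀ p ∈ S, Continuous p)
    {v : ℝ → ℝ} {a b : ℝ}
    (horth : ∀ w : ℝ → ℝ, ContDiff ℝ 1 w → w a = 0 → w b = 0 →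
      (∀ p ∈ S, ∫ y in a..b, p y * w y = 0) → ∫ y in a..b, deriv v y * deriv w y = 0)
    {ψ : ℝ → ℝ} (hψ : Continuous ψ) (hψ1 : ∫ y in a..b, ψ y = 0)
    (hψS : ∀ p ∈ S, ∫ y in a..b, (∫ t in a..y, p t) * ψ y = 0) :
    ∫ y in a..b, deriv v y * ψ y = 0 := by
  set w : ℝ → ℝ := fun x => ∫ t in a..x, ψ t
  have hw : ∀ y, HasDerivAt w (ψ y) y := fun y => (hψ.integral_hasStrictDerivAt a y).hasDerivAt
  have hw' : deriv w = ψ := funext fun y => (hw y).deriv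
  have hwa : w a = 0 := intervalIntegral.integral_same
  have hwc : ContDiff ℝ 1 w := contDiff_one_iff_deriv.2 ⟨fun y => (hw y).differentiableAt, hw' ▸ hψ⟩
  simpa only [hw'] using horth w hwc hwa hψ1 fun p hp => by
    rw [integral_mul_eq_neg_integral_primitive_mul (hS p hp) hw (hψ.intervalIntegrable a b) hwa
      hψ1, hψS p hp, neg_zero]

theorem integral_deriv_mul_deriv_eq_integral_mul {v vH w : ℝ → ℝ} {c a b : ℝ} (hab : a ≤ b)
    (hvH : Continuous vH) (hv : EqOn (deriv v) (fun y => c - ∫ t in a..y, vH t) (Icc a b))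
    (hw : ContDiff ℝ 1 w) (hwa : w a = 0) (hwb : w b = 0) :
    ∫ y in a..b, deriv v y * deriv w y = ∫ y in a..b, vH y * w y := by
  have hw' : Continuous (deriv w) := hw.continuous_deriv_one
  have hwd : ∀ y, HasDerivAt w (deriv w y) y :=
    fun y => (hw.differentiable one_ne_zero y).hasDerivAt
  have hprim : Continuous fun y => ∫ t in a..y, vH t :=
    intervalIntegral.continuous_primitive (fun _ _ => hvH.intervalIntegrable _ _) a
  calc ∫ y in a..b, deriv v y * deriv w y
      = ∫ y in a..b, (c * deriv w y - (∫ t in a..y, vH t) * deriv w y) :=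
        intervalIntegral.integral_congr fun y hy => by
          rw [uIcc_of_le hab] at hy
          rw [hv hy]; ring
    _ = c * (w b - w a) - ∫ y in a..b, (∫ t in a..y, vH t) * deriv w y := by
        rw [intervalIntegral.integral_sub (f := fun y => c * deriv w y)
          (g := fun y => (∫ t in a..y, vH t) * deriv w y) ((hw'.intervalIntegrable a b).const_mul c)
          ((hprim.mul hw').intervalIntegrable a b), intervalIntegral.integral_const_mul,
          intervalIntegral.integral_eq_sub_of_hasDerivAt (fun y _ => hwd y)
            (hw'.intervalIntegrable a b)]
    _ = ∫ y in a..b, vH y * w y := by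
        rw [integral_mul_eq_neg_integral_primitive_mul hvH hwd (hw'.intervalIntegrable a b) hwa hwb,
          hwa, hwb]
        ring

theorem exists_cubic_eqOn_of_deriv_eqOn_sub_primitive {v vH : ℝ → ℝ} {c a s e : ℝ}
    (hv : Differentiable ℝ v) (hvH : Continuous vH)
    (hderiv : EqOn (deriv v) (fun y => c - ∫ t in a..y, vH t) (Icc s e))
    (haff : ∃ α β : ℝ, ∀ y ∈ Icc s e, vH y = α * y + β) :
    ∃ p : ℝ[X], p.natDegree ≤ 3 ∧ ∀ y ∈ Icc s e, v y = p.eval y := by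
  obtain ⟨α, β, hvH_eq⟩ := haff
  obtain ⟨P, hPdeg, hP⟩ := exists_polynomial_eqOn_of_hasDerivAt_eval
    (f := fun y => ∫ t in a..y, vH t) (q := C α * X + C β) (n := 1) (s := s) (e := e) (by compute_degree!) fun y hy => by
      simpa [hvH_eq y hy] using (hvH.integral_hasStrictDerivAt a y).hasDerivAt
  exact exists_polynomial_eqOn_of_hasDerivAt_eval (q := C c - P) (n := 2)
    ((natDegree_sub_le _ _).trans (max_le (by simp) hPdeg)) fun y hy => by
      simpa [← hP hy, hderiv hy] using (hv y).hasDerivAt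

section P1

variable {M : ℕ} {xp : Fin (M + 1) → ℝ}

def IsAffineOnCells (xp : Fin (M + 1) → ℝ) (p : ℝ → ℝ) : Prop :=
  ∀ i : Fin M, ∃ a b : ℝ, ∀ y ∈ Icc (xp i.castSucc) (xp i.succ), p y = a * y + b

/-- The P1 finite element space `V_H` of the partition `xp`. -/
def p1Space (xp : Fin (M + 1) → ℝ) : Submodule ℝ (ℝ → ℝ) where
  carrier := {p | Continuous p ∧ p 0 = 0 ∧ p 1 = 0 ∧ IsAffineOnCells xp p}
  zero_mem' := ⟨continuous_const, rfl, rfl, fun _ => ⟨0, 0, fun _ _ => by simp⟩⟩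
  add_mem' := by
    rintro p q ⟨hp, hp0, hp1, hpa⟩ ⟨hq, hq0, hq1, hqa⟩
    refine ⟨hp.add hq, by simp [hp0, hq0], by simp [hp1, hq1], fun i => ?_⟩
    obtain ⟨a, b, hab⟩ := hpa i
    obtain ⟨a', b', hab'⟩ := hqa i
    exact ⟨a + a', b + b', fun y hy => by simp only [Pi.add_apply, hab y hy, hab' y hy]; ring⟩
  smul_mem' := by
    rintro c p ⟨hp, hp0, hp1, hpa⟩
    refine ⟨hp.const_smul c, by simp [hp0], by simp [hp1], fun i => ?_⟩
    obtain ⟨a, b, hab⟩ := hpa i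
    exact ⟨c * a, c * b, fun y hy => by simp only [Pi.smul_apply, smul_eq_mul, hab y hy]; ring⟩

theorem exists_mem_Icc_cell (hM : M ≠ 0) {y : ℝ} (hy : y ∈ Icc (xp 0) (xp (Fin.last M))) :
    ∃ i : Fin M, y ∈ Icc (xp i.castSucc) (xp i.succ) := by
  by_contra! hcell
  have hlt : ∀ j : Fin (M + 1), j ≠ 0 → xp j < y := by
    intro j
    induction j using Fin.induction with
    | zero => exact fun h => absurd rfl h
    | succ i ih =>
      have hi : xp i.castSucc ≤ y := by
        rcases eq_or_ne i.castSucc 0 with h0 | h0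
        · exact h0 ▸ hy.1
        · exact (ih h0).le
      exact fun _ => lt_of_not_ge fun hle => hcell i ⟨hi, hle⟩
  exact (hlt _ fun h => hM (by simpa [Fin.ext_iff] using h)).not_ge hy.2

theorem IsAffineOnCells.eqOn_zero (hM : M ≠ 0) {p : ℝ → ℝ} (hp : IsAffineOnCells xp p)
    (hnodes : ∀ j, p (xp j) = 0) : EqOn p 0 (Icc (xp 0) (xp (Fin.last M))) := by
  intro y hy
  obtain ⟨i, hyi⟩ := exists_mem_Icc_cell hM hy
  obtain ⟨a, b, hab⟩ := hp i
  have hs := hnodes i.castSucc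
  have he := hnodes i.succ
  have hse : xp i.castSucc ≤ xp i.succ := hyi.1.trans hyi.2
  rw [hab _ ⟨le_rfl, hse⟩] at hs
  rw [hab _ ⟨hse, le_rfl⟩] at he
  rw [hab y hyi, Pi.zero_apply]
  rcases hse.eq_or_lt with heq | hlt
  · rw [show y = xp i.castSucc by linarith [hyi.1, hyi.2], hs]
  · have ha : a = 0 := by nlinarith
    subst ha
    linarith

-- A P1 function is determined on `[0, 1]` by its nodal values, so lifting a basis of the space
-- of nodal values gives a finite family spanning `p1Space xp` modulo functions vanishing there.
theorem exists_fin_family_eqOn_sum_of_mem_p1Space (hM : M ≠ 0) (hxp0 : xp 0 = 0)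
    (hxpM : xp (Fin.last M) = 1) :
    ∃ (n : ℕ) (φ : Fin n → ℝ → ℝ), (∀ k, φ k ∈ p1Space xp) ∧
      ∀ p ∈ p1Space xp, ∃ d : Fin n → ℝ, EqOn p (∑ k, d k • φ k) (Icc 0 1) := by
  let ev : p1Space xp →ₗ[ℝ] Fin (M + 1) → ℝ := LinearMap.funLeft ℝ ℝ xp ∘ₗ (p1Space xp).subtype
  let b := Module.finBasis ℝ (LinearMap.range ev)
  choose φ hφ using fun k => LinearMap.mem_range.1 (b k).2
  refine ⟨_, fun k => φ k, fun k => (φ k).2, fun p hp => ?_⟩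
  let d := b.repr ⟨ev ⟨p, hp⟩, LinearMap.mem_range_self _ _⟩
  have hnodes : ev (⟨p, hp⟩ - ∑ k, d k • φ k) = 0 := by
    have := congrArg Subtype.val (b.sum_repr ⟨ev ⟨p, hp⟩, LinearMap.mem_range_self _ _⟩)
    simp only [Submodule.coe_sum, Submodule.coe_smul] at this
    simp only [map_sub, map_sum, map_smul, hφ]
    exact sub_eq_zero.2 this.symm
  refine ⟨d, fun y hy => sub_eq_zero.1 ?_⟩
  have hmem := (⟨p, hp⟩ - ∑ k, d k • φ k : p1Space xp).2
  have := hmem.2.2.2.eqOn_zero hM (fun j => congrFun hnodes j) (by rwa [hxp0, hxpM])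
  simpa using this

theorem exists_deriv_eqOn_sub_primitive_of_orthogonal (hM : M ≠ 0) (hxp0 : xp 0 = 0)
    (hxpM : xp (Fin.last M) = 1) {v : ℝ → ℝ} (hv : Continuous (deriv v))
    (horth : ∀ w : ℝ → ℝ, ContDiff ℝ 1 w → w 0 = 0 → w 1 = 0 →
      (∀ p ∈ p1Space xp, ∫ y in (0:ℝ)..1, p y * w y = 0) →
      ∫ y in (0:ℝ)..1, deriv v y * deriv w y = 0) :
    ∃ c : ℝ, ∃ vH ∈ p1Space xp, EqOn (deriv v) (fun y => c - ∫ t in (0:ℝ)..y, vH t) (Icc 0 1) := by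
  obtain ⟨n, φ, hφ, hspan⟩ := exists_fin_family_eqOn_sum_of_mem_p1Space hM hxp0 hxpM
  have hφc : ∀ k, Continuous (φ k) := fun k => (hφ k).1
  -- `u` spans the derivatives of `Δ⁻¹ V_H` on `[0, 1]`
  let u : Option (Fin n) → ℝ → ℝ := fun k => k.elim (fun _ => 1) fun k y => ∫ t in (0:ℝ)..y, φ k t
  have hu : ∀ k, Continuous (u k) := by
    rintro (_ | k)
    exacts [continuous_const,
      intervalIntegral.continuous_primitive (fun _ _ => (hφc k).intervalIntegrable _ _) 0]
  obtain ⟨c, hc⟩ := exists_eqOn_sum_of_forall_integral_mul_eq_zero zero_lt_one hv hu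
    fun ψ hψ hψu => integral_deriv_mul_eq_zero_of_orthogonal (fun p hp => hp.1) horth hψ
      (by simpa [u] using hψu none) fun p hp => by
        obtain ⟨d, hd⟩ := hspan p hp
        exact integral_primitive_mul_eq_zero_of_eqOn_sum hφc zero_le_one hd hψ fun k => hψu (some k)
  refine ⟨c none, -∑ k, c (some k) • φ k,
    neg_mem (sum_mem fun k _ => Submodule.smul_mem _ _ (hφ k)), fun y hy => ?_⟩
  simp only [hc hy, Fintype.sum_option, Pi.neg_apply, intervalIntegral.integral_neg,
    integral_sum_smul_apply _ _ hφc, sub_neg_eq_add]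
  simp [u]

end P1

theorem lod_1d_piecewise_cubic_general
    (M : ℕ) (hM : 1 ≤ M)
    (xp : Fin (M + 1) → ℝ) (hxp : StrictMono xp)
    (hxp0 : xp 0 = 0) (hxpM : xp (Fin.last M) = 1)
    -- the P1 finite element space: continuous, piecewise affine, vanishing at 0 and 1
    (VH : Set (ℝ → ℝ))
    (hVH : VH = {p : ℝ → ℝ | Continuous p ∧ p 0 = 0 ∧ p 1 = 0 ∧
      ∀ i : Fin M, ∃ a b : ℝ, ∀ y ∈ Set.Icc (xp i.castSucc) (xp i.succ), p y = a * y + b})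
    (v : ℝ → ℝ) (hv : ContDiff ℝ 1 v)
    -- v is a_c-orthogonal to the detail space W = {w : (p, w)_{L²} = 0 ∀ p ∈ V_H}
    (horth : ∀ w : ℝ → ℝ, ContDiff ℝ 1 w → w 0 = 0 → w 1 = 0 →
      (∀ p ∈ VH, ∫ y in (0:ℝ)..1, p y * w y = 0) →
      ∫ y in (0:ℝ)..1, deriv v y * deriv w y = 0) :
    (∃ vH ∈ VH, ∀ w : ℝ → ℝ, ContDiff ℝ 1 w → w 0 = 0 → w 1 = 0 →
      (∫ y in (0:ℝ)..1, deriv v y * deriv w y) = ∫ y in (0:ℝ)..1, vH y * w y) ∧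
    (∀ i : Fin M, ∃ p : Polynomial ℝ, p.natDegree ≤ 3 ∧
      ∀ y ∈ Set.Icc (xp i.castSucc) (xp i.succ), v y = p.eval y) := by
  subst hVH
  obtain ⟨c, vH, hvH, hderiv⟩ := exists_deriv_eqOn_sub_primitive_of_orthogonal (by omega) hxp0 hxpM
    hv.continuous_deriv_one horth
  have hcell : ∀ i : Fin M, Icc (xp i.castSucc) (xp i.succ) ⊆ Icc 0 1 := fun i =>
    Icc_subset_Icc (hxp0 ▸ hxp.monotone (Fin.zero_le _)) (hxpM ▸ hxp.monotone (Fin.le_last _))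
  refine ⟨⟨vH, hvH, fun w hw hw0 hw1 =>
    integral_deriv_mul_deriv_eq_integral_mul zero_le_one hvH.1 hderiv hw hw0 hw1⟩, fun i => ?_⟩
  exact exists_cubic_eqOn_of_deriv_eqOn_sub_primitive (hv.differentiable one_ne_zero) hvH.1
    (hderiv.mono (hcell i)) (hvH.2.2.2 i)

/-- One-dimensional canonical LOD functions are piecewise cubic: on `D = (0,1)` with
`a_c(u,v) = ∫₀¹ u'v'`, if `v` belongs to the `a_c`-orthogonal complement of the detail space
`W` (the kernel of the `L²`-projection onto the P1 finite element space `V_H` on the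
partition `0 = x₀ < … < x_M = 1`), then `v = Δ⁻¹ v_H` for some `v_H ∈ V_H` — i.e.
`a_c(v, w) = (v_H, w)` for all test functions `w` — and consequently `v` is a piecewise
polynomial of degree at most `3` on the partition. -/
theorem lod_1d_piecewise_cubic
    (M : ℕ) (hM : 1 ≤ M)
    (xp : Fin (M + 1) → ℝ) (hxp : StrictMono xp)
    (hxp0 : xp 0 = 0) (hxpM : xp (Fin.last M) = 1)
    -- the P1 finite element space: continuous, piecewise affine, vanishing at 0 and 1
    (VH : Set (ℝ → ℝ))
    (hVH : VH = {p : ℝ → ℝ | Continuous p ∧ p 0 = 0 ∧ p 1 = 0 ∧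
      ∀ i : Fin M, ∃ a b : ℝ, ∀ y ∈ Set.Icc (xp i.castSucc) (xp i.succ), p y = a * y + b})
    (v : ℝ → ℝ) (hv : ContDiff ℝ 1 v) (hv0 : v 0 = 0) (hv1 : v 1 = 0)
    -- v is a_c-orthogonal to the detail space W = {w : (p, w)_{L²} = 0 ∀ p ∈ V_H}
    (horth : ∀ w : ℝ → ℝ, ContDiff ℝ 1 w → w 0 = 0 → w 1 = 0 →
      (∀ p ∈ VH, ∫ y in (0:ℝ)..1, p y * w y = 0) →
      ∫ y in (0:ℝ)..1, deriv v y * deriv w y = 0) :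
    (∃ vH ∈ VH, ∀ w : ℝ → ℝ, ContDiff ℝ 1 w → w 0 = 0 → w 1 = 0 →
      (∫ y in (0:ℝ)..1, deriv v y * deriv w y) = ∫ y in (0:ℝ)..1, vH y * w y) ∧
    (∀ i : Fin M, ∃ p : Polynomial ℝ, p.natDegree ≤ 3 ∧
      ∀ y ∈ Set.Icc (xp i.castSucc) (xp i.succ), v y = p.eval y) :=
  lod_1d_piecewise_cubic_general M hM xp hxp hxp0 hxpM VH hVH v hv horth
end
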